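/- Let U, V ∈ ℝ^{n×r} have orthonormal columns. For real p ∈ [2, ∞) define the Schatten p-norm of a real matrix M by ‖M‖_p = (∑_i s_i(M)^p)^{1/p}, where s_i(M) are the singular values of M. Then for every p ∈ [2, ∞), ‖(I_n − UUᵀ)·V‖_p ≤ min_{O orthogonal, O ∈ ℝ^{r×r}} ‖UO − V‖_p ≤ √2·‖(I_n − UUᵀ)·V‖_p, and the same two-sided inequality holds with the operator (spectral) norm in place of ‖·‖_p. -/

import Mathlib

open MeasureTheory ProbabilityTheory Matrix

noncomputable section

/-- ℓ²→ℓ² operator (spectral) norm of a real matrix. -/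
def opNorm {m n : Type*} [Fintype m] [Fintype n] [DecidableEq n]
    (M : Matrix m n ℝ) : ℝ :=
  ‖LinearMap.toContinuousLinearMap (Matrix.toEuclideanLin M)‖

/-- ℓ²→ℓ² operator (spectral) norm of a complex matrix. -/
def opNormC {m n : Type*} [Fintype m] [Fintype n] [DecidableEq n]
    (M : Matrix m n ℂ) : ℝ :=
  ‖LinearMap.toContinuousLinearMap (Matrix.toEuclideanLin M)‖

/-- Euclidean norm of a finitely indexed real vector. -/
def vnorm {n : Type*} [Fintype n] (x : n → ℝ) : ℝ :=
  Real.sqrt (∑ i, (x i) ^ 2)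

/-- `‖M‖_{2,∞}`: the maximum Euclidean norm of the rows of `M`. -/
def twoInf {m n : Type*} [Fintype m] [Fintype n] (M : Matrix m n ℝ) : ℝ :=
  ⨆ i, vnorm (M i)

/-- The diagonal matrix `diag (σ 1, …, σ m)` built from a 1-indexed sequence `σ`. -/
def sdiag {m : ℕ} (σ : ℕ → ℝ) : Matrix (Fin m) (Fin m) ℝ :=
  Matrix.of fun i j => if i = j then σ ((i : ℕ) + 1) else 0

/-- Orthogonal projection `W_{k,s} W_{k,s}ᵀ` onto the span of the (1-indexed)
columns `k,…,s` of `W`. -/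
def projSlice {N m : ℕ} (W : Matrix (Fin N) (Fin m) ℝ) (k s : ℕ) :
    Matrix (Fin N) (Fin N) ℝ :=
  Matrix.of fun a b =>
    ∑ j : Fin m, if k ≤ (j : ℕ) + 1 ∧ (j : ℕ) + 1 ≤ s then W a j * W b j else 0

/-- `‖·‖_{2,∞}` of the submatrix of `M` given by the (1-indexed) columns `k,…,s`. -/
def sliceTwoInf {N m : ℕ} (M : Matrix (Fin N) (Fin m) ℝ) (k s : ℕ) : ℝ :=
  ⨆ a, Real.sqrt (∑ j : Fin m,
    if k ≤ (j : ℕ) + 1 ∧ (j : ℕ) + 1 ≤ s then (M a j) ^ 2 else 0)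

/-- `η = (11 b²/(b−1)²) √(2 (log 9) r + (K+7) log(N+n))`. -/
def eta (N n r : ℕ) (K b : ℝ) : ℝ :=
  11 * b ^ 2 / (b - 1) ^ 2 *
    Real.sqrt (2 * Real.log 9 * r + (K + 7) * Real.log ((N : ℝ) + n))

/-- `χ(b) = 1 + 1/(4b(b−1))`. -/
def chi (b : ℝ) : ℝ := 1 + 1 / (4 * b * (b - 1))

/-- `ξ(b) = 1 + 1/(2(b−1)²)`. -/
def xib (b : ℝ) : ℝ := 1 + 1 / (2 * (b - 1) ^ 2)

/-- `γ = (9 b²/(b−1)²) √(r (K+7) log(N+n))`. -/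
def gam (N n r : ℕ) (K b : ℝ) : ℝ :=
  9 * b ^ 2 / (b - 1) ^ 2 *
    Real.sqrt ((r : ℝ) * (K + 7) * Real.log ((N : ℝ) + n))

/-- `min {δ_{k-1}, δ_s}` where `δ_j = σ_j − σ_{j+1}` (1-indexed) and `δ_0 = ∞`
(so for `k = 1` the minimum is just `δ_s`). -/
def dmin (σ : ℕ → ℝ) (k s : ℕ) : ℝ :=
  if k = 1 then σ s - σ (s + 1) else min (σ (k - 1) - σ k) (σ s - σ (s + 1))

/-- The symmetric dilation `ℰ = [[0, E], [Eᵀ, 0]]` of a rectangular matrix `E`. -/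
def dil {N n : ℕ} (E : Matrix (Fin N) (Fin n) ℝ) :
    Matrix (Fin N ⊕ Fin n) (Fin N ⊕ Fin n) ℝ :=
  Matrix.fromBlocks 0 E Eᵀ 0

/-- Complex resolvent `G(z) = (z I − ℰ)⁻¹` of the dilation. -/
def resolvC {N n : ℕ} (z : ℂ) (E : Matrix (Fin N) (Fin n) ℝ) :
    Matrix (Fin N ⊕ Fin n) (Fin N ⊕ Fin n) ℂ :=
  (z • (1 : Matrix (Fin N ⊕ Fin n) (Fin N ⊕ Fin n) ℂ) -
      (dil E).map (Complex.ofReal))⁻¹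

/-- `φ₁(z) = z − ∑_{t=N+1}^{N+n} G(z)_{tt}` (complex version). -/
def phi1C {N n : ℕ} (z : ℂ) (E : Matrix (Fin N) (Fin n) ℝ) : ℂ :=
  z - ∑ t : Fin n, resolvC z E (Sum.inr t) (Sum.inr t)

/-- `φ₂(z) = z − ∑_{t=1}^{N} G(z)_{tt}` (complex version). -/
def phi2C {N n : ℕ} (z : ℂ) (E : Matrix (Fin N) (Fin n) ℝ) : ℂ :=
  z - ∑ t : Fin N, resolvC z E (Sum.inl t) (Sum.inl t)

/-- Real resolvent `G(z) = (z I − ℰ)⁻¹` of the dilation, for real `z`. -/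
def resolvR {N n : ℕ} (z : ℝ) (E : Matrix (Fin N) (Fin n) ℝ) :
    Matrix (Fin N ⊕ Fin n) (Fin N ⊕ Fin n) ℝ :=
  (z • (1 : Matrix (Fin N ⊕ Fin n) (Fin N ⊕ Fin n) ℝ) - dil E)⁻¹

/-- `φ₁(z)` for real `z` (equals the complex version at a real point). -/
def phi1R {N n : ℕ} (z : ℝ) (E : Matrix (Fin N) (Fin n) ℝ) : ℝ :=
  z - ∑ t : Fin n, resolvR z E (Sum.inr t) (Sum.inr t)

/-- `φ₂(z)` for real `z` (equals the complex version at a real point). -/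
def phi2R {N n : ℕ} (z : ℝ) (E : Matrix (Fin N) (Fin n) ℝ) : ℝ :=
  z - ∑ t : Fin N, resolvR z E (Sum.inl t) (Sum.inl t)

/-- `Φ(z)`: diagonal matrix whose first `N` diagonal entries are `1/φ₁(z)` and whose
last `n` diagonal entries are `1/φ₂(z)`. -/
def PhiC {N n : ℕ} (z : ℂ) (E : Matrix (Fin N) (Fin n) ℝ) :
    Matrix (Fin N ⊕ Fin n) (Fin N ⊕ Fin n) ℂ :=
  Matrix.of fun p q =>
    if p = q then Sum.elim (fun _ => (phi1C z E)⁻¹) (fun _ => (phi2C z E)⁻¹) p else 0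

/-- The `(N+n) × 2r` matrix `𝒰` of eigenvectors of the dilation of `A = U D Vᵀ`. -/
def calU {N n r : ℕ} (U : Matrix (Fin N) (Fin r) ℝ) (V : Matrix (Fin n) (Fin r) ℝ) :
    Matrix (Fin N ⊕ Fin n) (Fin r ⊕ Fin r) ℝ :=
  Matrix.fromBlocks ((Real.sqrt 2)⁻¹ • U) ((Real.sqrt 2)⁻¹ • U)
    ((Real.sqrt 2)⁻¹ • V) (-((Real.sqrt 2)⁻¹ • V))

/-- Schatten `p`-norm: `(∑ᵢ sᵢ(M)ᵖ)^{1/p}`, where the singular values `sᵢ(M)` are the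
square roots of the eigenvalues of `Mᴴ M`. -/
def schatten (p : ℝ) {m r : ℕ} (M : Matrix (Fin m) (Fin r) ℝ) : ℝ :=
  (∑ i, Real.sqrt ((show (Mᵀ * M).IsHermitian by
    simpa using Matrix.isHermitian_conjTranspose_mul_self M).eigenvalues i) ^ p) ^ (1 / p)

/-! With `C = Uᵀ V`, both Gram matrices are affine in `C`:
`((1 - U Uᵀ) V)ᵀ ((1 - U Uᵀ) V) = 1 - Cᵀ C` and `(U O - V)ᵀ (U O - V) = 2 - Oᵀ C - Cᵀ O`.
Their difference is `(O - C)ᵀ (O - C) ⪰ 0`, whence the lower bound for every orthogonal `O`.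
For the polar decomposition `C = O K` (`O` orthogonal, `K ⪰ 0`) one has `Oᵀ C = Cᵀ O = K` and
`K² = Cᵀ C ≤ 1`, hence `K² ≤ K`, so the second Gram matrix `2 - 2 K` is at most `2 (1 - K²)`.
A Loewner inequality `Mᵀ M ≤ c • Nᵀ N` gives `‖M‖ ≤ √c ‖N‖`: pointwise for the operator norm,
and for Schatten norms with `p ≥ 2` by bounding each eigenvalue of `Mᵀ M` by `c` times a
convex combination of those of `Nᵀ N` (the weights form a doubly stochastic matrix) and applying
Jensen's inequality to `t ↦ t ^ (p / 2)`. -/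

open scoped MatrixOrder

theorem Matrix.posSemidef_transpose_mul_self {m n : Type*} [Fintype m] [Fintype n]
    (M : Matrix m n ℝ) : (Mᵀ * M).PosSemidef := by
  simpa using posSemidef_conjTranspose_mul_self M

theorem OrthonormalBasis.sum_inner_sq_eq_one {ι E : Type*} [Fintype ι] [NormedAddCommGroup E]
    [InnerProductSpace ℝ E] (b : OrthonormalBasis ι ℝ E) {x : E} (hx : ‖x‖ = 1) :
    ∑ j, inner ℝ (b j) x ^ 2 = 1 := by
  have := b.sum_inner_mul_inner x x
  rw [real_inner_self_eq_norm_sq, hx] at this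
  simpa [sq, real_inner_comm] using this

namespace Matrix.IsHermitian

variable {ι : Type*} [Fintype ι] [DecidableEq ι] {A : Matrix ι ι ℝ}

theorem dotProduct_mulVec_eq_sum_eigenvalues (hA : A.IsHermitian) (x : EuclideanSpace ℝ ι) :
    x.ofLp ⬝ᵥ A *ᵥ x.ofLp =
      ∑ j, hA.eigenvalues j * inner ℝ (hA.eigenvectorBasis j) x ^ 2 := by
  nth_rewrite 2 [← hA.eigenvectorBasis.sum_repr' x]
  simp only [WithLp.ofLp_sum, WithLp.ofLp_smul, mulVec_sum, mulVec_smul, mulVec_eigenvectorBasis,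
    dotProduct_sum, dotProduct_smul, smul_eq_mul, EuclideanSpace.inner_eq_star_dotProduct,
    star_trivial]
  exact Finset.sum_congr rfl fun j _ => by ring

theorem transpose_eigenvectorUnitary_mul_self (hA : A.IsHermitian) :
    (hA.eigenvectorUnitary : Matrix ι ι ℝ)ᵀ * hA.eigenvectorUnitary = 1 := by
  simpa [star_eq_conjTranspose] using Unitary.coe_star_mul_self hA.eigenvectorUnitary

theorem transpose_eigenvectorUnitary_mul_mul (hA : A.IsHermitian) :
    (hA.eigenvectorUnitary : Matrix ι ι ℝ)ᵀ * A * hA.eigenvectorUnitary =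
      diagonal hA.eigenvalues := by
  simpa [Unitary.conjStarAlgAut_apply, star_eq_conjTranspose] using
    hA.conjStarAlgAut_star_eigenvectorUnitary

end Matrix.IsHermitian

namespace Matrix

variable {ι : Type*} [Fintype ι] [DecidableEq ι]

theorem PosSemidef.sum_eigenvalues_rpow_le_of_le {A B : Matrix ι ι ℝ} (hA : A.PosSemidef)
    (hB : B.PosSemidef) {c q : ℝ} (hc : 0 ≤ c) (hq : 1 ≤ q) (h : B ≤ c • A) :
    ∑ i, hB.1.eigenvalues i ^ q ≤ c ^ q * ∑ j, hA.1.eigenvalues j ^ q := by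
  set a := hA.1.eigenvectorBasis
  set v := hB.1.eigenvectorBasis
  set w : ι → ι → ℝ := fun j i => inner ℝ (a j) (v i) ^ 2
  have hw_col (i : ι) : ∑ j, w j i = 1 := a.sum_inner_sq_eq_one (v.orthonormal.1 i)
  have hw_row (j : ι) : ∑ i, w j i = 1 := by
    rw [← v.sum_inner_sq_eq_one (a.orthonormal.1 j)]
    simp only [w, real_inner_comm (a j)]
  have hμ (j : ι) : 0 ≤ hA.1.eigenvalues j := hA.eigenvalues_nonneg j
  have hle (i : ι) : hB.1.eigenvalues i ≤ c * ∑ j, w j i * hA.1.eigenvalues j := by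
    have hquad := (le_iff.mp h).dotProduct_mulVec_nonneg (v i).ofLp
    have hBv : hB.1.eigenvalues i = (v i).ofLp ⬝ᵥ B *ᵥ (v i).ofLp := by
      simpa using hB.1.eigenvalues_eq i
    rw [star_trivial, sub_mulVec, smul_mulVec, dotProduct_sub, dotProduct_smul, smul_eq_mul,
      hA.1.dotProduct_mulVec_eq_sum_eigenvalues, ← hBv] at hquad
    simpa only [w, mul_comm (hA.1.eigenvalues _)] using sub_nonneg.mp hquad
  have hper (i : ι) : hB.1.eigenvalues i ^ q ≤ c ^ q * ∑ j, w j i * hA.1.eigenvalues j ^ q := by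
    have hS : 0 ≤ ∑ j, w j i * hA.1.eigenvalues j :=
      Finset.sum_nonneg fun j _ => mul_nonneg (sq_nonneg _) (hμ j)
    calc hB.1.eigenvalues i ^ q ≤ (c * ∑ j, w j i * hA.1.eigenvalues j) ^ q :=
          Real.rpow_le_rpow (hB.eigenvalues_nonneg i) (hle i) (by linarith)
      _ = c ^ q * (∑ j, w j i * hA.1.eigenvalues j) ^ q := Real.mul_rpow hc hS
      _ ≤ c ^ q * ∑ j, w j i * hA.1.eigenvalues j ^ q := by
        gcongr
        exact Real.rpow_arith_mean_le_arith_mean_rpow _ _ _ (fun j _ => sq_nonneg _)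
          (hw_col i) (fun j _ => hμ j) hq
  calc ∑ i, hB.1.eigenvalues i ^ q ≤ ∑ i, c ^ q * ∑ j, w j i * hA.1.eigenvalues j ^ q :=
        Finset.sum_le_sum fun i _ => hper i
    _ = c ^ q * ∑ j, hA.1.eigenvalues j ^ q := by
        rw [← Finset.mul_sum, Finset.sum_comm]
        simp_rw [← Finset.sum_mul, hw_row, one_mul]

theorem exists_orthogonal_eq_mul_diagonal_sqrt {X : Matrix ι ι ℝ} {d : ι → ℝ}
    (hX : Xᵀ * X = diagonal d) :
    ∃ Q : Matrix ι ι ℝ, Qᵀ * Q = 1 ∧ X = Q * diagonal fun j => √(d j) := by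
  -- the nonzero columns of `X`, normalized, are orthonormal; `Q` extends them to a basis
  set col : ι → EuclideanSpace ℝ ι := fun j => WithLp.toLp 2 (Xᵀ j)
  have hinner (j k : ι) : inner ℝ (col j) (col k) = diagonal d j k := by
    rw [← hX, EuclideanSpace.inner_eq_star_dotProduct, star_trivial, dotProduct_comm]
    rfl
  have hd (j : ι) : d j = ‖col j‖ ^ 2 := by
    rw [← real_inner_self_eq_norm_sq, hinner, diagonal_apply_eq]
  have hd_pos {j : ι} (hj : d j ≠ 0) : 0 < d j :=
    lt_of_le_of_ne (by rw [hd]; positivity) (Ne.symm hj)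
  set s : Set ι := {j | d j ≠ 0}
  have hu : Orthonormal ℝ (s.domRestrict fun j => (√(d j))⁻¹ • col j) := by
    rw [orthonormal_iff_ite]
    rintro ⟨j, hj⟩ ⟨k, hk⟩
    simp only [Set.domRestrict_apply, inner_smul_left, inner_smul_right, hinner, Subtype.mk.injEq,
      RCLike.conj_to_real]
    by_cases hjk : j = k
    · subst hjk
      rw [if_pos rfl, diagonal_apply_eq, ← mul_assoc, ← mul_inv, Real.mul_self_sqrt (hd_pos hj).le,
        inv_mul_cancel₀ (hd_pos hj).ne']
    · rw [if_neg hjk, diagonal_apply_ne _ hjk, mul_zero, mul_zero]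
  obtain ⟨b, hb⟩ := hu.exists_orthonormalBasis_extension_of_card_eq (by simp)
  refine ⟨(EuclideanSpace.basisFun ι ℝ).toBasis.toMatrix b, ?_, ?_⟩
  · simpa [star_eq_conjTranspose] using mem_unitaryGroup_iff'.mp
      ((EuclideanSpace.basisFun ι ℝ).toMatrix_orthonormalBasis_mem_unitary b)
  ext a j
  rw [mul_diagonal]
  change X a j = b j a * √(d j)
  by_cases hj : d j = 0
  · have : col j = 0 := by rw [← norm_eq_zero, ← sq_eq_zero_iff, ← hd, hj]
    rw [hj, Real.sqrt_zero, mul_zero]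
    exact congrArg (fun v : EuclideanSpace ℝ ι => v a) this
  · rw [hb j hj]
    have : √(d j) ≠ 0 := Real.sqrt_ne_zero'.mpr (hd_pos hj)
    change X a j = (√(d j))⁻¹ * X a j * √(d j)
    field_simp

theorem exists_svd (C : Matrix ι ι ℝ) :
    ∃ (P Q : Matrix ι ι ℝ) (σ : ι → ℝ), Pᵀ * P = 1 ∧ Qᵀ * Q = 1 ∧ (∀ j, 0 ≤ σ j) ∧
      C = Q * diagonal σ * Pᵀ := by
  have hS := (posSemidef_transpose_mul_self C).1
  set P : Matrix ι ι ℝ := (hS.eigenvectorUnitary : Matrix ι ι ℝ)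
  have hP : Pᵀ * P = 1 := hS.transpose_eigenvectorUnitary_mul_self
  obtain ⟨Q, hQ, hCP⟩ := exists_orthogonal_eq_mul_diagonal_sqrt (X := C * P)
    (d := hS.eigenvalues) (by
      rw [transpose_mul, ← hS.transpose_eigenvectorUnitary_mul_mul]
      simp only [Matrix.mul_assoc, P])
  refine ⟨P, Q, fun j => √(hS.eigenvalues j), hP, hQ, fun j => Real.sqrt_nonneg _, ?_⟩
  rw [← hCP, Matrix.mul_assoc, mul_eq_one_comm.mp hP, Matrix.mul_one]

theorem exists_polar (C : Matrix ι ι ℝ) :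
    ∃ O K : Matrix ι ι ℝ, Oᵀ * O = 1 ∧ K.PosSemidef ∧ C = O * K := by
  obtain ⟨P, Q, σ, hP, hQ, hσ, rfl⟩ := exists_svd C
  refine ⟨Q * Pᵀ, P * diagonal σ * Pᵀ, ?_, ?_, ?_⟩
  · rw [transpose_mul, transpose_transpose, Matrix.mul_assoc, ← Matrix.mul_assoc Qᵀ, hQ,
      Matrix.one_mul, mul_eq_one_comm.mp hP]
  · exact conjTranspose_eq_transpose_of_trivial P ▸
      (posSemidef_diagonal_iff.mpr hσ).mul_mul_conjTranspose_same P
  · simp only [Matrix.mul_assoc]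
    rw [← Matrix.mul_assoc Pᵀ P, hP, Matrix.one_mul]

theorem PosSemidef.mul_self_le_self_of_mul_self_le_one {K : Matrix ι ι ℝ} (hK : K.PosSemidef)
    (h : K * K ≤ 1) : K * K ≤ K := by
  set P : Matrix ι ι ℝ := (hK.1.eigenvectorUnitary : Matrix ι ι ℝ)
  set σ := hK.1.eigenvalues
  have hP : Pᵀ * P = 1 := hK.1.transpose_eigenvectorUnitary_mul_self
  have hconj (X : Matrix ι ι ℝ) : Pᵀ * (P * X * Pᵀ) * P = X := by
    simp only [← Matrix.mul_assoc, hP, Matrix.one_mul]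
    rw [Matrix.mul_assoc, hP, Matrix.mul_one]
  have hK_eq : K = P * diagonal σ * Pᵀ := by
    have hP' : P * Pᵀ = 1 := mul_eq_one_comm.mp hP
    rw [← hK.1.transpose_eigenvectorUnitary_mul_mul]
    simp only [← Matrix.mul_assoc]
    rw [hP', Matrix.one_mul, Matrix.mul_assoc, hP', Matrix.mul_one]
  have hsq : K * K = P * diagonal (σ * σ) * Pᵀ := by
    rw [hK_eq]
    simp only [Matrix.mul_assoc]
    rw [← Matrix.mul_assoc Pᵀ P, hP, Matrix.one_mul, ← Matrix.mul_assoc (diagonal σ),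
      diagonal_mul_diagonal]
    rfl
  have hσ1 (j : ι) : σ j * σ j ≤ 1 := by
    have h' := (le_iff.mp h).conjTranspose_mul_mul_same P
    rw [hsq, conjTranspose_eq_transpose_of_trivial, Matrix.mul_sub, Matrix.sub_mul,
      Matrix.mul_one, hP, hconj, ← diagonal_one, diagonal_sub] at h'
    simpa using posSemidef_diagonal_iff.mp h' j
  have hd : (diagonal fun j => σ j - σ j * σ j).PosSemidef :=
    posSemidef_diagonal_iff.mpr fun j => by nlinarith [hK.eigenvalues_nonneg j, hσ1 j]
  rw [le_iff, hsq, hK_eq, ← Matrix.sub_mul, ← Matrix.mul_sub, diagonal_sub]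
  exact conjTranspose_eq_transpose_of_trivial P ▸ hd.mul_mul_conjTranspose_same P

theorem exists_orthogonal_two_sub_le {C : Matrix ι ι ℝ} (hC : Cᵀ * C ≤ 1) :
    ∃ O : Matrix ι ι ℝ, Oᵀ * O = 1 ∧ 2 - Oᵀ * C - Cᵀ * O ≤ (2 : ℝ) • (1 - Cᵀ * C) := by
  obtain ⟨O, K, hO, hK, rfl⟩ := exists_polar C
  have hKt : Kᵀ = K := by simpa [conjTranspose_eq_transpose_of_trivial] using hK.1.eq
  have hOC : Oᵀ * (O * K) = K := by rw [← Matrix.mul_assoc, hO, Matrix.one_mul]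
  have hCO : (O * K)ᵀ * O = K := by rw [transpose_mul, hKt, Matrix.mul_assoc, hO, Matrix.mul_one]
  have hCC : (O * K)ᵀ * (O * K) = K * K := by rw [transpose_mul, hKt, Matrix.mul_assoc, hOC]
  rw [hCC] at hC
  have hKK := le_iff.mp (hK.mul_self_le_self_of_mul_self_le_one hC)
  refine ⟨O, hO, ?_⟩
  rw [le_iff, hOC, hCO, hCC]
  convert hKK.smul (zero_le_two : (0 : ℝ) ≤ 2) using 1
  rw [smul_sub, smul_sub, two_smul, two_smul, two_smul, ← one_add_one_eq_two]
  abel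

theorem norm_toEuclideanLin_sq {m n : Type*} [Fintype m] [Fintype n] [DecidableEq n]
    (M : Matrix m n ℝ) (x : EuclideanSpace ℝ n) :
    ‖toEuclideanLin M x‖ ^ 2 = x.ofLp ⬝ᵥ (Mᵀ * M) *ᵥ x.ofLp := by
  rw [← real_inner_self_eq_norm_sq, EuclideanSpace.inner_eq_star_dotProduct, star_trivial,
    ← mulVec_mulVec, dotProduct_mulVec, vecMul_transpose]
  rfl

end Matrix

theorem opNorm_le_sqrt_mul_of_le {m m' n : Type*} [Fintype m] [Fintype m'] [Fintype n]
    [DecidableEq n] {M : Matrix m n ℝ} {N : Matrix m' n ℝ} {c : ℝ}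
    (h : Mᵀ * M ≤ c • (Nᵀ * N)) : opNorm M ≤ √c * opNorm N := by
  refine ContinuousLinearMap.opNorm_le_bound _ (by unfold opNorm; positivity) fun x => ?_
  have hsq : ‖toEuclideanLin M x‖ ^ 2 ≤ c * ‖toEuclideanLin N x‖ ^ 2 := by
    have := (le_iff.mp h).dotProduct_mulVec_nonneg x.ofLp
    rw [star_trivial, sub_mulVec, smul_mulVec, dotProduct_sub, dotProduct_smul, smul_eq_mul]
      at this
    rw [norm_toEuclideanLin_sq, norm_toEuclideanLin_sq]
    linarith
  calc ‖(toEuclideanLin M).toContinuousLinearMap x‖ ≤ √(c * ‖toEuclideanLin N x‖ ^ 2) :=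
        Real.le_sqrt_of_sq_le hsq
    _ = √c * ‖toEuclideanLin N x‖ := by
        rw [Real.sqrt_mul' _ (sq_nonneg _), Real.sqrt_sq (norm_nonneg _)]
    _ ≤ √c * (opNorm N * ‖x‖) :=
        mul_le_mul_of_nonneg_left ((toEuclideanLin N).toContinuousLinearMap.le_opNorm x)
          (Real.sqrt_nonneg c)
    _ = √c * opNorm N * ‖x‖ := (mul_assoc ..).symm

theorem schatten_eq_sum_eigenvalues_rpow {m r : ℕ} (p : ℝ) (M : Matrix (Fin m) (Fin r) ℝ) :
    schatten p M =
      (∑ i, (posSemidef_transpose_mul_self M).1.eigenvalues i ^ (p / 2)) ^ (1 / p) := by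
  unfold schatten
  congr 1
  refine Finset.sum_congr rfl fun i _ => ?_
  rw [Real.sqrt_eq_rpow, ← Real.rpow_mul ((posSemidef_transpose_mul_self M).eigenvalues_nonneg i)]
  ring_nf

theorem schatten_le_sqrt_mul_of_le {m m' r : ℕ} {p : ℝ} (hp : 2 ≤ p)
    {M : Matrix (Fin m) (Fin r) ℝ} {N : Matrix (Fin m') (Fin r) ℝ} {c : ℝ} (hc : 0 ≤ c)
    (h : Mᵀ * M ≤ c • (Nᵀ * N)) : schatten p M ≤ √c * schatten p N := by
  have hM := posSemidef_transpose_mul_self M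
  have hN := posSemidef_transpose_mul_self N
  have hsum := hN.sum_eigenvalues_rpow_le_of_le hM hc (by linarith : 1 ≤ p / 2) h
  have hSM : 0 ≤ ∑ i, hM.1.eigenvalues i ^ (p / 2) :=
    Finset.sum_nonneg fun i _ => Real.rpow_nonneg (hM.eigenvalues_nonneg i) _
  have hSN : 0 ≤ ∑ i, hN.1.eigenvalues i ^ (p / 2) :=
    Finset.sum_nonneg fun i _ => Real.rpow_nonneg (hN.eigenvalues_nonneg i) _
  rw [schatten_eq_sum_eigenvalues_rpow, schatten_eq_sum_eigenvalues_rpow]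
  calc (∑ i, hM.1.eigenvalues i ^ (p / 2)) ^ (1 / p)
      ≤ (c ^ (p / 2) * ∑ i, hN.1.eigenvalues i ^ (p / 2)) ^ (1 / p) :=
        Real.rpow_le_rpow hSM hsum (by positivity)
    _ = √c * (∑ i, hN.1.eigenvalues i ^ (p / 2)) ^ (1 / p) := by
        rw [Real.mul_rpow (by positivity) hSN, ← Real.rpow_mul hc, Real.sqrt_eq_rpow]
        congr 2
        field_simp

section Procrustes

variable {m ι : Type*} [Fintype m] [Fintype ι] [DecidableEq m] [DecidableEq ι]
  {U V : Matrix m ι ℝ}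

theorem gram_sub_proj_mul (hU : Uᵀ * U = 1) (hV : Vᵀ * V = 1) :
    ((1 - U * Uᵀ) * V)ᵀ * ((1 - U * Uᵀ) * V) = 1 - (Uᵀ * V)ᵀ * (Uᵀ * V) := by
  have hsymm : (1 - U * Uᵀ)ᵀ = 1 - U * Uᵀ := by
    rw [transpose_sub, transpose_one, transpose_mul, transpose_transpose]
  have hidem : (1 - U * Uᵀ) * (1 - U * Uᵀ) = 1 - U * Uᵀ := by
    have : U * Uᵀ * (U * Uᵀ) = U * Uᵀ := by
      rw [Matrix.mul_assoc, ← Matrix.mul_assoc Uᵀ, hU, Matrix.one_mul]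
    rw [sub_mul, mul_sub, mul_sub, this, one_mul, one_mul, mul_one, sub_self, sub_zero]
  rw [transpose_mul, hsymm, Matrix.mul_assoc, ← Matrix.mul_assoc (1 - U * Uᵀ), hidem,
    Matrix.sub_mul, Matrix.one_mul, Matrix.mul_sub, hV, transpose_mul, transpose_transpose,
    Matrix.mul_assoc, Matrix.mul_assoc]

omit [DecidableEq m] in
theorem gram_mul_sub (hU : Uᵀ * U = 1) (hV : Vᵀ * V = 1) {O : Matrix ι ι ℝ} (hO : Oᵀ * O = 1) :
    (U * O - V)ᵀ * (U * O - V) = 2 - Oᵀ * (Uᵀ * V) - (Uᵀ * V)ᵀ * O := by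
  have hUO : (U * O)ᵀ * (U * O) = 1 := by
    rw [transpose_mul, Matrix.mul_assoc, ← Matrix.mul_assoc Uᵀ, hU, Matrix.one_mul, hO]
  rw [transpose_sub, Matrix.sub_mul, Matrix.mul_sub, Matrix.mul_sub, hUO, hV, transpose_mul,
    transpose_mul, transpose_transpose, Matrix.mul_assoc, Matrix.mul_assoc, ← one_add_one_eq_two]
  abel

theorem gram_sub_proj_mul_le_gram_mul_sub (hU : Uᵀ * U = 1) (hV : Vᵀ * V = 1)
    {O : Matrix ι ι ℝ} (hO : Oᵀ * O = 1) :
    ((1 - U * Uᵀ) * V)ᵀ * ((1 - U * Uᵀ) * V) ≤ (U * O - V)ᵀ * (U * O - V) := by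
  have hdiff : (U * O - V)ᵀ * (U * O - V) - ((1 - U * Uᵀ) * V)ᵀ * ((1 - U * Uᵀ) * V) =
      (O - Uᵀ * V)ᵀ * (O - Uᵀ * V) := by
    rw [gram_sub_proj_mul hU hV, gram_mul_sub hU hV hO, transpose_sub, sub_mul, mul_sub, mul_sub,
      hO, ← one_add_one_eq_two]
    abel
  rw [le_iff, hdiff]
  exact posSemidef_transpose_mul_self _

theorem exists_orthogonal_gram_mul_sub_le (hU : Uᵀ * U = 1) (hV : Vᵀ * V = 1) :
    ∃ O : Matrix ι ι ℝ, Oᵀ * O = 1 ∧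
      (U * O - V)ᵀ * (U * O - V) ≤ (2 : ℝ) • (((1 - U * Uᵀ) * V)ᵀ * ((1 - U * Uᵀ) * V)) := by
  have hC : (Uᵀ * V)ᵀ * (Uᵀ * V) ≤ 1 := by
    rw [le_iff, ← gram_sub_proj_mul hU hV]
    exact posSemidef_transpose_mul_self _
  obtain ⟨O, hO, hle⟩ := exists_orthogonal_two_sub_le hC
  exact ⟨O, hO, by rwa [gram_mul_sub hU hV hO, gram_sub_proj_mul hU hV]⟩

end Procrustes

theorem stmt14_procrustes_schatten_general
    (n r : ℕ)
    (U V : Matrix (Fin n) (Fin r) ℝ) (hU : Uᵀ * U = 1) (hV : Vᵀ * V = 1) :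
    (∀ p : ℝ, 2 ≤ p →
      (∀ O : Matrix (Fin r) (Fin r) ℝ, Oᵀ * O = 1 →
        schatten p ((1 - U * Uᵀ) * V) ≤ schatten p (U * O - V)) ∧
      ∃ O : Matrix (Fin r) (Fin r) ℝ, Oᵀ * O = 1 ∧
        schatten p (U * O - V) ≤ Real.sqrt 2 * schatten p ((1 - U * Uᵀ) * V)) ∧
    (∀ O : Matrix (Fin r) (Fin r) ℝ, Oᵀ * O = 1 →
      opNorm ((1 - U * Uᵀ) * V) ≤ opNorm (U * O - V)) ∧
    ∃ O : Matrix (Fin r) (Fin r) ℝ, Oᵀ * O = 1 ∧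
      opNorm (U * O - V) ≤ Real.sqrt 2 * opNorm ((1 - U * Uᵀ) * V) := by
  have hlower (O : Matrix (Fin r) (Fin r) ℝ) (hO : Oᵀ * O = 1) :
      ((1 - U * Uᵀ) * V)ᵀ * ((1 - U * Uᵀ) * V) ≤ (1 : ℝ) • ((U * O - V)ᵀ * (U * O - V)) := by
    rw [one_smul]
    exact gram_sub_proj_mul_le_gram_mul_sub hU hV hO
  obtain ⟨O₀, hO₀, hupper⟩ := exists_orthogonal_gram_mul_sub_le hU hV
  refine ⟨fun p hp => ⟨fun O hO => ?_, O₀, hO₀, schatten_le_sqrt_mul_of_le hp zero_le_two hupper⟩,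
    fun O hO => ?_, O₀, hO₀, opNorm_le_sqrt_mul_of_le hupper⟩
  · simpa using schatten_le_sqrt_mul_of_le hp zero_le_one (hlower O hO)
  · simpa using opNorm_le_sqrt_mul_of_le (hlower O hO)

/-- inequality (11) of the paper: two-sided Procrustes comparison
for Schatten p-norms (p ≥ 2) and the operator norm. -/
theorem stmt14_procrustes_schatten
    (n r : ℕ) (hr : 0 < r) (hrn : r ≤ n)
    (U V : Matrix (Fin n) (Fin r) ℝ) (hU : Uᵀ * U = 1) (hV : Vᵀ * V = 1) :
    (∀ p : ℝ, 2 ≤ p →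
      (∀ O : Matrix (Fin r) (Fin r) ℝ, Oᵀ * O = 1 →
        schatten p ((1 - U * Uᵀ) * V) ≤ schatten p (U * O - V)) ∧
      ∃ O : Matrix (Fin r) (Fin r) ℝ, Oᵀ * O = 1 ∧
        schatten p (U * O - V) ≤ Real.sqrt 2 * schatten p ((1 - U * Uᵀ) * V)) ∧
    (∀ O : Matrix (Fin r) (Fin r) ℝ, Oᵀ * O = 1 →
      opNorm ((1 - U * Uᵀ) * V) ≤ opNorm (U * O - V)) ∧
    ∃ O : Matrix (Fin r) (Fin r) ℝ, Oᵀ * O = 1 ∧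
      opNorm (U * O - V) ≤ Real.sqrt 2 * opNorm ((1 - U * Uᵀ) * V) :=
  stmt14_procrustes_schatten_general n r U V hU hV
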